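/- Define K_{S¹} : ℝ → ℝ by K_{S¹}(θ) = (π/2) sin(2θ) sgn(θ) − (θ/2) sin(2θ) − (1/8) cos(2θ). Then for every integer k, the k-th Fourier coefficient (1/2π) ∫_{−π}^{π} K_{S¹}(θ) e^{ikθ} dθ equals 1/(4 − k²) if |k| ≠ 2, and equals 0 if |k| = 2. -/

import Mathlib

open Real intervalIntegral

noncomputable section

/-- The 1D Biot–Savart kernel
`K_{S¹}(θ) = (π/2) sin(2θ) sgn(θ) − (θ/2) sin(2θ) − (1/8) cos(2θ)`. -/
def KS1 (θ : ℝ) : ℝ :=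
  Real.pi / 2 * Real.sin (2 * θ) * Real.sign θ - θ / 2 * Real.sin (2 * θ)
    - 1 / 8 * Real.cos (2 * θ)

/-! On `[0, π]`, `K_{S¹}(θ) = (π - θ)/2 · sin 2θ - cos 2θ / 8`, and `K_{S¹}` is the even extension
of this function, so its `k`-th Fourier coefficient is `(1/π) ∫₀^π K_{S¹}(θ) cos kθ dθ`.
Product-to-sum formulas turn this integral into a combination of `∫₀^π (π - θ) sin nθ dθ = π/n`
and `∫₀^π cos nθ dθ = π·[n = 0]` for `n = k ± 2`, which gives `1/(4 - k²)`; for `k = ±2` the two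
contributions `π/16` cancel. -/

theorem Function.Even.integral_ofReal_mul_cexp {f : ℝ → ℝ} (hf : f.Even) {a : ℝ}
    (hint : IntervalIntegrable f MeasureTheory.volume 0 a) (c : ℝ) :
    ∫ θ in -a..a, (f θ : ℂ) * Complex.exp (Complex.I * c * θ) =
      ((2 * ∫ θ in 0..a, f θ * cos (c * θ) : ℝ) : ℂ) := by
  have hint_neg : IntervalIntegrable f MeasureTheory.volume (-a) 0 := by
    simpa [hf _] using ((IntervalIntegrable.iff_comp_neg (f := f)).mp hint).symm
  have hg : ∀ {b d : ℝ}, IntervalIntegrable f MeasureTheory.volume b d → ∀ s : ℂ,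
      IntervalIntegrable (fun θ : ℝ => (f θ : ℂ) * Complex.exp (s * θ)) MeasureTheory.volume b d :=
    fun h s => IntervalIntegrable.mul_continuousOn ⟨h.1.ofReal, h.2.ofReal⟩ (by fun_prop)
  have hneg : ∫ θ in -a..0, (f θ : ℂ) * Complex.exp (Complex.I * c * θ) =
      ∫ θ in 0..a, (f θ : ℂ) * Complex.exp (-(Complex.I * c) * θ) := by
    rw [← neg_zero, ← integral_comp_neg]
    simp [hf _]
  rw [← integral_add_adjacent_intervals (hg hint_neg _) (hg hint _), hneg,
    ← integral_add (hg hint _) (hg hint _), ← integral_const_mul,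
    ← integral_ofReal]
  refine integral_congr fun θ _ => ?_
  push_cast
  rw [mul_left_comm 2 (f θ : ℂ), Complex.two_cos]
  ring_nf

-- Also true for `c = 0`, where both sides vanish because `a / 0 = 0`.
theorem integral_sub_mul_sin (a c : ℝ) :
    ∫ θ in 0..a, (a - θ) * sin (c * θ) = a / c - sin (c * a) / c ^ 2 := by
  rcases eq_or_ne c 0 with rfl | hc
  · simp
  have hF : ∀ θ : ℝ, HasDerivAt (fun t => (t - a) * cos (c * t) / c - sin (c * t) / c ^ 2)
      ((a - θ) * sin (c * θ)) θ := by
    intro θ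
    have hlin : HasDerivAt (fun t => c * t) c θ := by simpa using (hasDerivAt_id θ).const_mul c
    refine (((((hasDerivAt_id' θ).sub_const a).mul hlin.cos).div_const c).sub
      (hlin.sin.div_const (c ^ 2))).congr_deriv ?_
    field_simp
    ring
  rw [integral_eq_sub_of_hasDerivAt (fun θ _ => hF θ)
    ((by fun_prop : Continuous _).intervalIntegrable _ _)]
  simp only [sub_self, zero_mul, zero_div, zero_sub, mul_zero, cos_zero, mul_one, sin_zero, sub_zero]
  field_simp
  ring

theorem integral_pi_sub_mul_sin_intCast_mul (n : ℤ) :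
    ∫ θ in 0..π, (π - θ) * sin (n * θ) = π / n := by
  simp [integral_sub_mul_sin, sin_int_mul_pi]

theorem integral_cos_intCast_mul (n : ℤ) :
    ∫ θ in 0..π, cos (n * θ) = if n = 0 then π else 0 := by
  split_ifs with hn <;> simp [hn, sin_int_mul_pi]

theorem KS1_eq_abs (θ : ℝ) :
    KS1 θ = (π - |θ|) / 2 * sin (2 * |θ|) - 1 / 8 * cos (2 * |θ|) := by
  rcases lt_trichotomy θ 0 with h | rfl | h
  · rw [KS1, abs_of_neg h, Real.sign_of_neg h]
    simp only [mul_neg, sin_neg, cos_neg]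
    ring
  · simp [KS1]
  · rw [KS1, abs_of_pos h, Real.sign_of_pos h]
    ring

theorem continuous_KS1 : Continuous KS1 := by
  simp_rw [funext KS1_eq_abs]
  fun_prop

theorem even_KS1 : KS1.Even := fun θ => by simp only [KS1_eq_abs, abs_neg]

theorem KS1_mul_cos_of_nonneg (k : ℝ) {θ : ℝ} (hθ : 0 ≤ θ) :
    KS1 θ * cos (k * θ) =
      (π - θ) * sin ((k + 2) * θ) / 4 - (π - θ) * sin ((k - 2) * θ) / 4
        - cos ((k + 2) * θ) / 16 - cos ((k - 2) * θ) / 16 := by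
  rw [KS1_eq_abs, abs_of_nonneg hθ, add_mul k 2 θ, sub_mul k 2 θ, sin_add, sin_sub, cos_add, cos_sub]
  ring

theorem integral_KS1_mul_cos (k : ℤ) :
    ∫ θ in 0..π, KS1 θ * cos (k * θ) = if k = 2 ∨ k = -2 then 0 else π / (4 - k ^ 2) := by
  have hcongr : Set.EqOn (fun θ => KS1 θ * cos (k * θ)) (fun θ =>
      (π - θ) * sin (((k + 2 : ℤ) : ℝ) * θ) / 4 - (π - θ) * sin (((k - 2 : ℤ) : ℝ) * θ) / 4
        - cos (((k + 2 : ℤ) : ℝ) * θ) / 16 - cos (((k - 2 : ℤ) : ℝ) * θ) / 16) (Set.uIcc 0 π) :=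
    fun θ hθ => by
      push_cast
      exact KS1_mul_cos_of_nonneg k (Set.uIcc_of_le pi_pos.le ▸ hθ).1
  rw [integral_congr hcongr, integral_sub, integral_sub, integral_sub, integral_div, integral_div,
    integral_div, integral_div, integral_pi_sub_mul_sin_intCast_mul,
    integral_pi_sub_mul_sin_intCast_mul, integral_cos_intCast_mul, integral_cos_intCast_mul]
  all_goals try exact Continuous.intervalIntegrable (by fun_prop) _ _
  rcases eq_or_ne k 2 with rfl | hk2
  · norm_num
    ring
  rcases eq_or_ne k (-2) with rfl | hkm2
  · norm_num
    ring
  have hplus : k + 2 ≠ 0 := by omega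
  have hminus : k - 2 ≠ 0 := by omega
  have hplus' : (k : ℝ) + 2 ≠ 0 := by exact_mod_cast hplus
  have hminus' : (k : ℝ) - 2 ≠ 0 := by exact_mod_cast hminus
  have hsq : (4 : ℝ) - k ^ 2 ≠ 0 := by
    rw [show (4 : ℝ) - k ^ 2 = -((k + 2) * (k - 2)) by ring]
    exact neg_ne_zero.mpr (mul_ne_zero hplus' hminus')
  rw [if_neg hplus, if_neg hminus, if_neg (by tauto)]
  push_cast
  field_simp
  ring

/-- The Fourier coefficients of `K_{S¹}`: the `k`-th coefficient
`(1/2π) ∫_{−π}^{π} K_{S¹}(θ) e^{ikθ} dθ` equals `1/(4 − k²)` for `|k| ≠ 2`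
and `0` for `|k| = 2`. -/
theorem KS1_fourierCoeff (k : ℤ) :
    (1 / (2 * Real.pi) : ℂ) *
        ∫ θ in (-Real.pi)..Real.pi, (KS1 θ : ℂ) * Complex.exp (Complex.I * k * θ) =
      if k = 2 ∨ k = -2 then 0 else 1 / (4 - (k : ℂ) ^ 2) := by
  have h := even_KS1.integral_ofReal_mul_cexp (continuous_KS1.intervalIntegrable 0 π) k
  rw [Complex.ofReal_intCast] at h
  rw [h, integral_KS1_mul_cos]
  split_ifs
  · simp
  · push_cast
    field_simp
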